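/- Fix positive reals d1, d2, d3, d4 and angles α1, α2, α3, α4 ∈ (0, π) satisfying the deltoid condition: either (α1 = α2 and α3 = α4) or (α1 + α2 = π and α3 + α4 = π), together with cos²α1 ≠ cos²α3. Consider the set of tuples (v, w1, w2, w3, w4) of points of ℝ³ with dist(v, w_i) = d_i and ∠ w_i v w_{i+1} = α_i for all i (indices mod 4). Then the subset of flat tuples — those in which all five points are coplanar — is nonempty and is partitioned by congruence (simultaneous application of one isometry of ℝ³ to all five points) into exactly two classes; moreover, in every flat tuple the three points v, w1, w3 are collinear. -/

import Mathlib

open EuclideanGeometry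

noncomputable section

/-- Points of Euclidean 3-space. -/
abbrev Pt : Type := EuclideanSpace ℝ (Fin 3)

/-- A pyramid tuple: an apex together with four base points (indices mod 4). -/
abbrev PyrTuple : Type := Pt × (ZMod 4 → Pt)

/-- The set of pyramid tuples with apex-to-base distances `d i` and apex angles `α i`. -/
def pyrSet (d α : ZMod 4 → ℝ) : Set PyrTuple :=
  {t | ∀ i : ZMod 4, dist t.1 (t.2 i) = d i ∧ ∠ (t.2 i) t.1 (t.2 (i + 1)) = α i}

/-- A pyramid tuple is flat if its five points are coplanar. -/
def IsFlat (t : PyrTuple) : Prop :=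
  Coplanar ℝ ({t.1, t.2 0, t.2 1, t.2 2, t.2 3} : Set Pt)

/-- Two pyramid tuples are congruent if a single isometry of `ℝ³` maps the first
onto the second componentwise. -/
def PyrCongruent (t₁ t₂ : PyrTuple) : Prop :=
  ∃ σ : Pt ≃ᵢ Pt, σ t₁.1 = t₂.1 ∧ ∀ i, σ (t₁.2 i) = t₂.2 i

/-! Write the base points `w i` of a flat realization as vectors from the apex, in an orthonormal
frame of its plane whose first axis points to `w 0` and which puts `w 1` in the upper half-plane.
The deltoid condition says `cos (α 1) = σ cos (α 0)` and `cos (α 2) = σ cos (α 3)` for a sign `σ`,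
so `w 2 - σ (d 2 / d 0) w 0` is orthogonal to both `w 1` and `w 3`. Since
`cos² (α 0) ≠ cos² (α 3)`, these two span the plane, hence `w 2 = σ (d 2 / d 0) w 0`. All the
coordinates are then fixed except the side `η = ±1` of `w 3`; the two choices give the two
congruence classes, told apart by the distance from `w 1` to `w 3`. -/

open Module Submodule Real
open scoped RealInnerProductSpace

section OrthonormalPair

variable {E : Type*} [NormedAddCommGroup E] [InnerProductSpace ℝ E] {f₁ f₂ : E}

theorem orthonormal_pair_iff :
    Orthonormal ℝ ![f₁, f₂] ↔ ‖f₁‖ = 1 ∧ ‖f₂‖ = 1 ∧ ⟪f₁, f₂⟫ = 0 := by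
  simp
  tauto

theorem Orthonormal.inner_smul_add_smul (hf : Orthonormal ℝ ![f₁, f₂]) (a b c e : ℝ) :
    ⟪a • f₁ + b • f₂, c • f₁ + e • f₂⟫ = a * c + b * e := by
  obtain ⟨h₁, h₂, h₁₂⟩ := orthonormal_pair_iff.1 hf
  simp only [inner_add_left, inner_add_right, real_inner_smul_left, real_inner_smul_right,
    real_inner_self_eq_norm_sq, h₁, h₂, h₁₂, real_inner_comm f₁ f₂]
  ring

theorem Orthonormal.norm_smul_add_smul_sq (hf : Orthonormal ℝ ![f₁, f₂]) (a b : ℝ) :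
    ‖a • f₁ + b • f₂‖ ^ 2 = a ^ 2 + b ^ 2 := by
  rw [← real_inner_self_eq_norm_sq, hf.inner_smul_add_smul]
  ring

theorem Orthonormal.eq_inner_smul_add_inner_smul {K : Submodule ℝ E} [FiniteDimensional ℝ K]
    (hK : finrank ℝ K ≤ 2) (hf : Orthonormal ℝ ![f₁, f₂]) (h₁ : f₁ ∈ K) (h₂ : f₂ ∈ K)
    {z : E} (hz : z ∈ K) : z = ⟪f₁, z⟫ • f₁ + ⟪f₂, z⟫ • f₂ := by
  have hspan : span ℝ {f₁, f₂} = K := by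
    refine eq_of_le_of_finrank_le
      (span_le.2 (Set.insert_subset_iff.2 ⟨h₁, by simpa using h₂⟩)) ?_
    have := finrank_span_eq_card hf.linearIndependent
    rw [Matrix.range_cons_cons_empty, Fintype.card_fin] at this
    omega
  rw [← hspan] at hz
  obtain ⟨a, b, rfl⟩ := mem_span_pair.1 hz
  have ha : ⟪f₁, a • f₁ + b • f₂⟫ = a := by simpa using hf.inner_smul_add_smul 1 0 a b
  have hb : ⟪f₂, a • f₁ + b • f₂⟫ = b := by simpa using hf.inner_smul_add_smul 0 1 a b
  rw [ha, hb]

theorem exists_orthonormal_pair_adapted {x₀ x₁ : E}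
    (h : ⟪x₀, x₁⟫ ^ 2 < ‖x₀‖ ^ 2 * ‖x₁‖ ^ 2) :
    ∃ f₁ f₂ : E, Orthonormal ℝ ![f₁, f₂] ∧ f₁ ∈ span ℝ {x₀, x₁} ∧ f₂ ∈ span ℝ {x₀, x₁} ∧
      0 < ⟪f₁, x₀⟫ ∧ ⟪f₂, x₀⟫ = 0 ∧ 0 < ⟪f₂, x₁⟫ := by
  have hx₀ : x₀ ≠ 0 := by rintro rfl; simp at h
  set f₁ := ‖x₀‖⁻¹ • x₀
  set c := ⟪f₁, x₁⟫
  set g := x₁ - c • f₁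
  have hf₁ : ‖f₁‖ = 1 := norm_smul_inv_norm hx₀
  have hx₀f₁ : x₀ = ‖x₀‖ • f₁ := by simp [f₁, smul_smul, hx₀]
  have hx₁ : x₁ = g + c • f₁ := (sub_add_cancel _ _).symm
  have hf₁g : ⟪f₁, g⟫ = 0 := by simp [g, inner_sub_right, real_inner_smul_right, hf₁, c]
  have hgx₁ : ⟪g, x₁⟫ = ‖g‖ ^ 2 := by
    rw [hx₁, inner_add_right, real_inner_smul_right, real_inner_comm f₁ g, hf₁g,
      real_inner_self_eq_norm_sq, mul_zero, add_zero]
  have hg : g ≠ 0 := by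
    intro hg0
    have hx₁' : x₁ = c • f₁ := by rw [hx₁, hg0, zero_add]
    have hx₀f₁' : ⟪x₀, f₁⟫ = ‖x₀‖ := by
      conv_lhs => rw [hx₀f₁]
      rw [real_inner_smul_left, real_inner_self_eq_norm_sq, hf₁, one_pow, mul_one]
    refine h.ne ?_
    rw [hx₁', real_inner_smul_right, hx₀f₁', norm_smul, hf₁, mul_one, Real.norm_eq_abs, sq_abs]
    ring
  have hf₂ : ‖‖g‖⁻¹ • g‖ = 1 := norm_smul_inv_norm hg
  refine ⟨f₁, ‖g‖⁻¹ • g, orthonormal_pair_iff.2 ⟨hf₁, hf₂, ?_⟩, ?_, ?_, ?_, ?_, ?_⟩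
  · rw [real_inner_smul_right, hf₁g, mul_zero]
  · exact smul_mem _ _ (subset_span (by simp))
  · exact smul_mem _ _ (sub_mem (subset_span (by simp))
      (smul_mem _ _ (smul_mem _ _ (subset_span (by simp)))))
  · rw [hx₀f₁, real_inner_smul_right, real_inner_self_eq_norm_sq, hf₁]
    simpa using hx₀
  · rw [hx₀f₁, real_inner_smul_right, real_inner_comm, real_inner_smul_right, hf₁g]
    simp
  · rw [real_inner_smul_left, hgx₁]
    have := norm_pos_iff.2 hg
    positivity

end OrthonormalPair

theorem InnerProductGeometry.angle_eq_iff_inner_eq {V : Type*} [NormedAddCommGroup V]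
    [InnerProductSpace ℝ V] {x y : V} {θ : ℝ} (hx : x ≠ 0) (hy : y ≠ 0)
    (hθ : θ ∈ Set.Icc 0 π) : angle x y = θ ↔ ⟪x, y⟫ = ‖x‖ * ‖y‖ * cos θ := by
  rw [← cos_angle_mul_norm_mul_norm, ← injOn_cos.eq_iff ⟨angle_nonneg x y, angle_le_pi x y⟩ hθ,
    mul_comm, mul_right_inj' (by positivity)]

theorem coplanar_of_forall_vsub_mem_span {k V P : Type*} [DivisionRing k] [AddCommGroup V]
    [Module k V] [AddTorsor V P] {s : Set P} (p : P) (u w : V)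
    (h : ∀ q ∈ s, q -ᵥ p ∈ span k {u, w}) : Coplanar k s := by
  have hle : vectorSpan k s ≤ span k {u, w} := by
    rw [vectorSpan_def, span_le]
    rintro _ ⟨q₁, hq₁, q₂, hq₂, rfl⟩
    show q₁ -ᵥ q₂ ∈ span k {u, w}
    rw [← vsub_sub_vsub_cancel_right q₁ q₂ p]
    exact sub_mem (h q₁ hq₁) (h q₂ hq₂)
  refine (Submodule.rank_mono hle).trans ((rank_span_le _).trans ?_)
  exact (Cardinal.mk_insert_le).trans (by simp; norm_num)

theorem eq_zero_of_mul_sub_mul_ne_zero {a b c e u w : ℝ} (hdet : a * e - b * c ≠ 0)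
    (h₁ : a * u + b * w = 0) (h₂ : c * u + e * w = 0) : u = 0 ∧ w = 0 := by
  constructor
  · refine (mul_eq_zero.1 ?_).resolve_left hdet
    linear_combination e * h₁ - b * h₂
  · refine (mul_eq_zero.1 ?_).resolve_left hdet
    linear_combination a * h₂ - c * h₁

theorem ZMod.forall_four {P : ZMod 4 → Prop} : (∀ i, P i) ↔ P 0 ∧ P 1 ∧ P 2 ∧ P 3 :=
  ⟨fun h => ⟨h 0, h 1, h 2, h 3⟩, fun h i => by
    fin_cases i
    exacts [h.1, h.2.1, h.2.2.1, h.2.2.2]⟩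

theorem exists_linearIsometryEquiv_single_eq {n : ℕ} {f₁ f₂ : EuclideanSpace ℝ (Fin (n + 2))}
    (hf : Orthonormal ℝ ![f₁, f₂]) :
    ∃ e : EuclideanSpace ℝ (Fin (n + 2)) ≃ₗᵢ[ℝ] EuclideanSpace ℝ (Fin (n + 2)),
      e (EuclideanSpace.single 0 1) = f₁ ∧ e (EuclideanSpace.single 1 1) = f₂ := by
  have hs : Orthonormal ℝ (({0, 1} : Set (Fin (n + 2))).domRestrict
      (Matrix.vecCons f₁ (Matrix.vecCons f₂ 0))) := by
    obtain ⟨n₁, n₂, h₁₂⟩ := orthonormal_pair_iff.1 hf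
    rw [orthonormal_iff_ite]
    rintro ⟨i, hi⟩ ⟨j, hj⟩
    simp only [Set.mem_insert_iff, Set.mem_singleton_iff] at hi hj
    rcases hi with rfl | rfl <;> rcases hj with rfl | rfl <;>
      simp [Set.domRestrict, n₁, n₂, h₁₂, real_inner_comm f₁ f₂]
  obtain ⟨b, hb⟩ := hs.exists_orthonormalBasis_extension_of_card_eq (by simp)
  exact ⟨b.repr.symm, by simp [hb 0 (by simp)], by simp [hb 1 (by simp)]⟩

theorem exists_linearIsometryEquiv_orthonormal_pair {n : ℕ}
    {f₁ f₂ g₁ g₂ : EuclideanSpace ℝ (Fin (n + 2))}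
    (hf : Orthonormal ℝ ![f₁, f₂]) (hg : Orthonormal ℝ ![g₁, g₂]) :
    ∃ e : EuclideanSpace ℝ (Fin (n + 2)) ≃ₗᵢ[ℝ] EuclideanSpace ℝ (Fin (n + 2)),
      e f₁ = g₁ ∧ e f₂ = g₂ := by
  obtain ⟨e, he₁, he₂⟩ := exists_linearIsometryEquiv_single_eq hf
  obtain ⟨e', he₁', he₂'⟩ := exists_linearIsometryEquiv_single_eq hg
  exact ⟨e.symm.trans e', by simp [← he₁, he₁'], by simp [← he₂, he₂']⟩

theorem mem_pyrSet_iff {d α : ZMod 4 → ℝ} (hd : ∀ i, 0 < d i) (hα : ∀ i, α i ∈ Set.Icc 0 π)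
    {t : PyrTuple} : t ∈ pyrSet d α ↔ ∀ i, ‖t.2 i -ᵥ t.1‖ = d i ∧
      ⟪t.2 i -ᵥ t.1, t.2 (i + 1) -ᵥ t.1⟫ = d i * d (i + 1) * cos (α i) := by
  have hangle : ∀ i, ‖t.2 i -ᵥ t.1‖ = d i → ‖t.2 (i + 1) -ᵥ t.1‖ = d (i + 1) →
      (∠ (t.2 i) t.1 (t.2 (i + 1)) = α i ↔
        ⟪t.2 i -ᵥ t.1, t.2 (i + 1) -ᵥ t.1⟫ = d i * d (i + 1) * cos (α i)) := by
    intro i h₁ h₂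
    rw [EuclideanGeometry.angle, InnerProductGeometry.angle_eq_iff_inner_eq
      (norm_ne_zero_iff.1 (h₁ ▸ (hd i).ne')) (norm_ne_zero_iff.1 (h₂ ▸ (hd (i + 1)).ne')) (hα i),
      h₁, h₂]
  simp only [pyrSet, Set.mem_ofPred_eq, dist_eq_norm_vsub' Pt]
  exact ⟨fun h i => ⟨(h i).1, (hangle i (h i).1 (h (i + 1)).1).1 (h i).2⟩,
    fun h i => ⟨(h i).1, (hangle i (h i).1 (h (i + 1)).1).2 (h i).2⟩⟩

theorem PyrCongruent.dist_eq {t₁ t₂ : PyrTuple} (h : PyrCongruent t₁ t₂) (i j : ZMod 4) :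
    dist (t₁.2 i) (t₁.2 j) = dist (t₂.2 i) (t₂.2 j) := by
  obtain ⟨e, -, he⟩ := h
  rw [← he i, ← he j, e.dist_eq]

def IsPyrCoords (d α x y : ZMod 4 → ℝ) : Prop :=
  ∀ i, x i ^ 2 + y i ^ 2 = d i ^ 2 ∧ x i * x (i + 1) + y i * y (i + 1) = d i * d (i + 1) * cos (α i)

namespace PyrTuple

def ofFrame (v f₁ f₂ : Pt) (x y : ZMod 4 → ℝ) : PyrTuple :=
  (v, fun i => v + (x i • f₁ + y i • f₂))

variable {f₁ f₂ : Pt} {x y : ZMod 4 → ℝ}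

theorem ofFrame_vsub (v : Pt) (i : ZMod 4) :
    (ofFrame v f₁ f₂ x y).2 i -ᵥ (ofFrame v f₁ f₂ x y).1 = x i • f₁ + y i • f₂ := by
  simp [ofFrame]

theorem isFlat_ofFrame (v : Pt) : IsFlat (ofFrame v f₁ f₂ x y) := by
  refine coplanar_of_forall_vsub_mem_span v f₁ f₂ ?_
  simp only [ofFrame, Set.mem_insert_iff, Set.mem_singleton_iff]
  rintro q (rfl | rfl | rfl | rfl | rfl) <;> simp [mem_span_pair]

theorem dist_ofFrame_sq (hf : Orthonormal ℝ ![f₁, f₂]) (v : Pt) (i j : ZMod 4) :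
    dist ((ofFrame v f₁ f₂ x y).2 i) ((ofFrame v f₁ f₂ x y).2 j) ^ 2 =
      (x i - x j) ^ 2 + (y i - y j) ^ 2 := by
  rw [← hf.norm_smul_add_smul_sq, dist_eq_norm]
  congr 2
  simp only [ofFrame]
  module

theorem collinear_ofFrame {i j : ZMod 4} (hi : y i = 0) (hj : y j = 0) (v : Pt) :
    Collinear ℝ {v, (ofFrame v f₁ f₂ x y).2 i, (ofFrame v f₁ f₂ x y).2 j} := by
  rw [collinear_iff_of_mem (Set.mem_insert v _)]
  refine ⟨f₁, ?_⟩
  simp only [ofFrame, Set.mem_insert_iff, Set.mem_singleton_iff]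
  rintro p (rfl | rfl | rfl)
  · exact ⟨0, by simp⟩
  · exact ⟨x i, by simp [hi, add_comm]⟩
  · exact ⟨x j, by simp [hj, add_comm]⟩

theorem pyrCongruent_ofFrame {g₁ g₂ : Pt} (hf : Orthonormal ℝ ![f₁, f₂])
    (hg : Orthonormal ℝ ![g₁, g₂]) (v w : Pt) :
    PyrCongruent (ofFrame v f₁ f₂ x y) (ofFrame w g₁ g₂ x y) := by
  obtain ⟨e, he₁, he₂⟩ := exists_linearIsometryEquiv_orthonormal_pair hf hg
  refine ⟨((IsometryEquiv.subRight v).trans e.toIsometryEquiv).trans (IsometryEquiv.addLeft w),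
    by simp [ofFrame], fun i => ?_⟩
  simp [ofFrame, he₁, he₂]

theorem ofFrame_mem_pyrSet_iff {d α : ZMod 4 → ℝ} (hf : Orthonormal ℝ ![f₁, f₂])
    (hd : ∀ i, 0 < d i) (hα : ∀ i, α i ∈ Set.Icc 0 π) (v : Pt) :
    ofFrame v f₁ f₂ x y ∈ pyrSet d α ↔ IsPyrCoords d α x y := by
  simp only [mem_pyrSet_iff hd hα, ofFrame_vsub, hf.inner_smul_add_smul, IsPyrCoords,
    ← sq_eq_sq₀ (norm_nonneg _) (hd _).le, hf.norm_smul_add_smul_sq]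

end PyrTuple

theorem exists_eq_ofFrame_of_isFlat {t : PyrTuple} (ht : IsFlat t)
    (h : ⟪t.2 0 -ᵥ t.1, t.2 1 -ᵥ t.1⟫ ^ 2 < ‖t.2 0 -ᵥ t.1‖ ^ 2 * ‖t.2 1 -ᵥ t.1‖ ^ 2) :
    ∃ (f₁ f₂ : Pt) (x y : ZMod 4 → ℝ), Orthonormal ℝ ![f₁, f₂] ∧
      t = PyrTuple.ofFrame t.1 f₁ f₂ x y ∧ 0 < x 0 ∧ y 0 = 0 ∧ 0 < y 1 := by
  set K := vectorSpan ℝ ({t.1, t.2 0, t.2 1, t.2 2, t.2 3} : Set Pt)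
  have : FiniteDimensional ℝ K := ht.finiteDimensional_vectorSpan
  have hK : finrank ℝ K ≤ 2 := coplanar_iff_finrank_le_two.1 ht
  have hmem : ∀ i, t.2 i -ᵥ t.1 ∈ K := by
    refine ZMod.forall_four.2 ?_
    simp only [K]
    refine ⟨?_, ?_, ?_, ?_⟩ <;> exact vsub_mem_vectorSpan ℝ (by simp) (by simp)
  obtain ⟨f₁, f₂, hf, h₁, h₂, hx₀, hy₀, hy₁⟩ := exists_orthonormal_pair_adapted h
  have hspan : span ℝ {t.2 0 -ᵥ t.1, t.2 1 -ᵥ t.1} ≤ K :=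
    span_le.2 (Set.insert_subset_iff.2 ⟨hmem 0, by simpa using hmem 1⟩)
  refine ⟨f₁, f₂, fun i => ⟪f₁, t.2 i -ᵥ t.1⟫, fun i => ⟪f₂, t.2 i -ᵥ t.1⟫, hf,
    Prod.ext rfl (funext fun i => ?_), hx₀, hy₀, hy₁⟩
  dsimp only [PyrTuple.ofFrame]
  rw [← hf.eq_inner_smul_add_inner_smul hK (hspan h₁) (hspan h₂) (hmem i)]
  simp

section Deltoid

variable {d α : ZMod 4 → ℝ} {σ η : ℝ}

/-- Coordinates of the base points of a flat deltoid in a frame at the apex whose first axis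
points to `w 0`; in `deltoidY`, `η = ±1` is the side of that axis on which `w 3` lies. -/
def deltoidX (d α : ZMod 4 → ℝ) (σ : ℝ) : ZMod 4 → ℝ :=
  ![d 0, d 1 * cos (α 0), σ * d 2, d 3 * cos (α 3)]

def deltoidY (d α : ZMod 4 → ℝ) (η : ℝ) : ZMod 4 → ℝ :=
  ![0, d 1 * sin (α 0), 0, η * (d 3 * sin (α 3))]

theorem exists_sign_of_deltoid
    (h : (α 0 = α 1 ∧ α 2 = α 3) ∨ (α 0 + α 1 = π ∧ α 2 + α 3 = π)) :
    ∃ σ : ℝ, σ ^ 2 = 1 ∧ cos (α 1) = σ * cos (α 0) ∧ cos (α 2) = σ * cos (α 3) := by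
  rcases h with ⟨h₀₁, h₂₃⟩ | ⟨h₀₁, h₂₃⟩
  · exact ⟨1, one_pow 2, by rw [h₀₁, one_mul], by rw [h₂₃, one_mul]⟩
  · refine ⟨-1, by norm_num, ?_, ?_⟩
    · rw [show α 1 = π - α 0 by linarith, cos_pi_sub, neg_one_mul]
    · rw [show α 2 = π - α 3 by linarith, cos_pi_sub, neg_one_mul]

theorem isPyrCoords_deltoid (hσ : σ ^ 2 = 1) (hη : η ^ 2 = 1)
    (hc₁ : cos (α 1) = σ * cos (α 0)) (hc₂ : cos (α 2) = σ * cos (α 3)) :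
    IsPyrCoords d α (deltoidX d α σ) (deltoidY d α η) := by
  have h₀ := sin_sq_add_cos_sq (α 0)
  have h₃ := sin_sq_add_cos_sq (α 3)
  refine ZMod.forall_four.2 ⟨⟨?_, ?_⟩, ⟨?_, ?_⟩, ⟨?_, ?_⟩, ⟨?_, ?_⟩⟩ <;>
    (reduce_mod_char; simp [deltoidX, deltoidY, hc₁, hc₂])
  · ring
  · linear_combination d 1 ^ 2 * h₀
  · ring
  · linear_combination d 2 ^ 2 * hσ
  · ring
  · linear_combination d 3 ^ 2 * h₃ + (d 3 * sin (α 3)) ^ 2 * hη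
  · ring

theorem eq_deltoid_of_isPyrCoords (hd : ∀ i, 0 < d i) (hs₀ : 0 < sin (α 0))
    (hc₁ : cos (α 1) = σ * cos (α 0)) (hc₂ : cos (α 2) = σ * cos (α 3))
    (hne : cos (α 0) ^ 2 ≠ cos (α 3) ^ 2) {x y : ZMod 4 → ℝ} (h : IsPyrCoords d α x y)
    (hx₀ : 0 < x 0) (hy₀ : y 0 = 0) (hy₁ : 0 < y 1) :
    ∃ η : ℝ, (η = 1 ∨ η = -1) ∧ x = deltoidX d α σ ∧ y = deltoidY d α η := by
  obtain ⟨⟨n₀, i₀⟩, ⟨n₁, i₁⟩, -, ⟨n₃, i₃⟩⟩ := ZMod.forall_four.1 h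
  have i₂ := (h 2).2
  reduce_mod_char at i₀ i₁ i₂ i₃
  rw [hy₀] at i₀ i₃ n₀
  have hx0 : x 0 = d 0 := (sq_eq_sq₀ hx₀.le (hd 0).le).1 (by linear_combination n₀)
  have hx1 : x 1 = d 1 * cos (α 0) :=
    mul_left_cancel₀ (hd 0).ne' (by linear_combination i₀ - x 1 * hx0)
  have hy1 : y 1 = d 1 * sin (α 0) := by
    refine (sq_eq_sq₀ hy₁.le (mul_pos (hd 1) hs₀).le).1 ?_
    rw [hx1] at n₁
    linear_combination n₁ - d 1 ^ 2 * sin_sq_add_cos_sq (α 0)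
  have hx3 : x 3 = d 3 * cos (α 3) :=
    mul_right_cancel₀ (hd 0).ne' (by linear_combination i₃ - x 3 * hx0)
  obtain ⟨η, hη, hy3⟩ : ∃ η : ℝ, (η = 1 ∨ η = -1) ∧ y 3 = η * (d 3 * sin (α 3)) := by
    have : y 3 ^ 2 = (d 3 * sin (α 3)) ^ 2 := by
      rw [hx3] at n₃
      linear_combination n₃ - d 3 ^ 2 * sin_sq_add_cos_sq (α 3)
    rcases sq_eq_sq_iff_eq_or_eq_neg.1 this with h | h
    exacts [⟨1, Or.inl rfl, by rw [h, one_mul]⟩, ⟨-1, Or.inr rfl, by rw [h, neg_one_mul]⟩]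
  have hη2 : η ^ 2 = 1 := by rcases hη with rfl | rfl <;> norm_num
  -- `(x 2 - σ d 2, y 2)` is orthogonal to the coordinate vectors of `w 1` and `w 3`
  have hdet : cos (α 0) * (η * sin (α 3)) - sin (α 0) * cos (α 3) ≠ 0 := by
    intro h0
    apply hne
    linear_combination (cos (α 0) * η * sin (α 3) + sin (α 0) * cos (α 3)) * h0
      - cos (α 0) ^ 2 * sin (α 3) ^ 2 * hη2 - cos (α 0) ^ 2 * sin_sq_add_cos_sq (α 3)
      + cos (α 3) ^ 2 * sin_sq_add_cos_sq (α 0)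
  obtain ⟨hx2, hy2⟩ := eq_zero_of_mul_sub_mul_ne_zero hdet (u := x 2 - σ * d 2) (w := y 2)
    (mul_left_cancel₀ (hd 1).ne' (by rw [hx1, hy1, hc₁] at i₁; linear_combination i₁))
    (mul_left_cancel₀ (hd 3).ne' (by rw [hx3, hy3, hc₂] at i₂; linear_combination i₂))
  exact ⟨η, hη, funext <| ZMod.forall_four.2 ⟨hx0, hx1, sub_eq_zero.1 hx2, hx3⟩,
    funext <| ZMod.forall_four.2 ⟨hy₀, hy1, hy2, hy3⟩⟩

theorem exists_eq_ofFrame_deltoid (hd : ∀ i, 0 < d i) (hα : ∀ i, α i ∈ Set.Ioo 0 π)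
    (hc₁ : cos (α 1) = σ * cos (α 0)) (hc₂ : cos (α 2) = σ * cos (α 3))
    (hne : cos (α 0) ^ 2 ≠ cos (α 3) ^ 2) {t : PyrTuple} (ht : t ∈ pyrSet d α)
    (hflat : IsFlat t) :
    ∃ (f₁ f₂ : Pt) (η : ℝ), Orthonormal ℝ ![f₁, f₂] ∧ (η = 1 ∨ η = -1) ∧
      t = PyrTuple.ofFrame t.1 f₁ f₂ (deltoidX d α σ) (deltoidY d α η) := by
  have hα' : ∀ i, α i ∈ Set.Icc 0 π := fun i => Set.Ioo_subset_Icc_self (hα i)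
  have hs₀ : 0 < sin (α 0) := sin_pos_of_pos_of_lt_pi (hα 0).1 (hα 0).2
  obtain ⟨⟨n₀, i₀⟩, ⟨n₁, -⟩, -⟩ := ZMod.forall_four.1 ((mem_pyrSet_iff hd hα').1 ht)
  rw [zero_add] at i₀
  obtain ⟨f₁, f₂, x, y, hf, ht_eq, hx₀, hy₀, hy₁⟩ := exists_eq_ofFrame_of_isFlat hflat (by
    rw [i₀, n₀, n₁]
    have : 0 < (d 0 * d 1 * sin (α 0)) ^ 2 := by have := hd 0; have := hd 1; positivity
    linear_combination this + (d 0 * d 1) ^ 2 * sin_sq_add_cos_sq (α 0))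
  rw [ht_eq, PyrTuple.ofFrame_mem_pyrSet_iff hf hd hα'] at ht
  obtain ⟨η, hη, rfl, rfl⟩ := eq_deltoid_of_isPyrCoords hd hs₀ hc₁ hc₂ hne ht hx₀ hy₀ hy₁
  exact ⟨f₁, f₂, η, hf, hη, ht_eq⟩

theorem not_pyrCongruent_deltoid (hd : ∀ i, 0 < d i) (hs₀ : 0 < sin (α 0))
    (hs₃ : 0 < sin (α 3)) {f₁ f₂ : Pt} (hf : Orthonormal ℝ ![f₁, f₂]) (v : Pt) :
    ¬ PyrCongruent (PyrTuple.ofFrame v f₁ f₂ (deltoidX d α σ) (deltoidY d α 1))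
      (PyrTuple.ofFrame v f₁ f₂ (deltoidX d α σ) (deltoidY d α (-1))) := by
  intro h
  have h₁₃ := congrArg (· ^ 2) (h.dist_eq 1 3)
  simp only [PyrTuple.dist_ofFrame_sq hf] at h₁₃
  simp [deltoidX, deltoidY] at h₁₃
  nlinarith [mul_pos (mul_pos (hd 1) hs₀) (mul_pos (hd 3) hs₃)]

end Deltoid

/-- Flat realizations of a deltoid: for fixed positive distances `d i` and apex angles
`α i ∈ (0, π)` satisfying the deltoid condition (`(α₁, α₂)` and `(α₃, α₄)` each equal
or supplementary) and `cos² α₁ ≠ cos² α₃`, the set of flat pyramid tuples is nonempty,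
is partitioned by congruence into exactly two classes, and in every flat tuple the
apex and the first and third base points are collinear. -/
theorem deltoid_flat_realizations
    (d α : ZMod 4 → ℝ)
    (hd : ∀ i, 0 < d i)
    (hα : ∀ i, α i ∈ Set.Ioo 0 Real.pi)
    (hdeltoid : (α 0 = α 1 ∧ α 2 = α 3) ∨ (α 0 + α 1 = Real.pi ∧ α 2 + α 3 = Real.pi))
    (hnot : Real.cos (α 0) ^ 2 ≠ Real.cos (α 2) ^ 2) :
    (∃ t ∈ pyrSet d α, IsFlat t) ∧
    (∃ t₁ t₂, t₁ ∈ pyrSet d α ∧ IsFlat t₁ ∧ t₂ ∈ pyrSet d α ∧ IsFlat t₂ ∧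
      ¬ PyrCongruent t₁ t₂ ∧
      ∀ t ∈ pyrSet d α, IsFlat t → (PyrCongruent t t₁ ∨ PyrCongruent t t₂)) ∧
    (∀ t ∈ pyrSet d α, IsFlat t → Collinear ℝ ({t.1, t.2 0, t.2 2} : Set Pt)) := by
  obtain ⟨σ, hσ, hc₁, hc₂⟩ := exists_sign_of_deltoid hdeltoid
  have hne : cos (α 0) ^ 2 ≠ cos (α 3) ^ 2 := by rwa [hc₂, mul_pow, hσ, one_mul] at hnot
  have hsin (i : ZMod 4) : 0 < sin (α i) := sin_pos_of_pos_of_lt_pi (hα i).1 (hα i).2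
  have hE : Orthonormal ℝ ![EuclideanSpace.single (0 : Fin 3) (1 : ℝ), EuclideanSpace.single 1 1] :=
    orthonormal_pair_iff.2 ⟨by simp, by simp, EuclideanSpace.orthonormal_single.2 (by decide)⟩
  let T (η : ℝ) : PyrTuple := PyrTuple.ofFrame 0 (EuclideanSpace.single 0 1)
    (EuclideanSpace.single 1 1) (deltoidX d α σ) (deltoidY d α η)
  have hT (η : ℝ) (hη : η ^ 2 = 1) : T η ∈ pyrSet d α :=
    (PyrTuple.ofFrame_mem_pyrSet_iff hE hd (fun i => Set.Ioo_subset_Icc_self (hα i)) 0).2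
      (isPyrCoords_deltoid hσ hη hc₁ hc₂)
  have hclass {t : PyrTuple} (ht : t ∈ pyrSet d α) (hflat : IsFlat t) :=
    exists_eq_ofFrame_deltoid hd hα hc₁ hc₂ hne ht hflat
  refine ⟨⟨T 1, hT 1 (one_pow 2), PyrTuple.isFlat_ofFrame 0⟩,
    ⟨T 1, T (-1), hT 1 (one_pow 2), PyrTuple.isFlat_ofFrame 0, hT (-1) (by norm_num),
      PyrTuple.isFlat_ofFrame 0, not_pyrCongruent_deltoid hd (hsin 0) (hsin 3) hE 0,
      fun t ht hflat => ?_⟩, fun t ht hflat => ?_⟩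
  · obtain ⟨f₁, f₂, η, hf, rfl | rfl, ht_eq⟩ := hclass ht hflat <;> rw [ht_eq]
    · exact Or.inl (PyrTuple.pyrCongruent_ofFrame hf hE _ _)
    · exact Or.inr (PyrTuple.pyrCongruent_ofFrame hf hE _ _)
  · obtain ⟨f₁, f₂, η, -, -, ht_eq⟩ := hclass ht hflat
    rw [ht_eq]
    exact PyrTuple.collinear_ofFrame rfl rfl t.1
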